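/- arXiv:2302.00203 — 2 statements merged into one kernel-verified Lean document; each statement's English description precedes it below -/
import Mathlib

section
/- Let c_i, c_j, d be positive integers, let A_i ∈ ℝ^{c_i×d}, A_j ∈ ℝ^{c_j×d}, w_i ∈ ℝ^{c_i}, w_j ∈ ℝ^{c_j} be fixed, and for multi-channel coordinate matrices X_i ∈ ℝ^{3×c_i}, X_j ∈ ℝ^{3×c_j} define the geometric relation extractor T_R(X_i, X_j) = A_iᵀ ((w_i w_jᵀ) ⊙ D(X_i, X_j)) A_j ∈ ℝ^{d×d}, where D(X_i, X_j)(p, q) = ‖X_i(:,p) − X_j(:,q)‖₂ and ⊙ denotes the entrywise (Hadamard) product. Then T_R is E(3)-invariant: for every real orthogonal 3×3 matrix Q and every t ∈ ℝ³, T_R(Q X_i + t 1ᵀ, Q X_j + t 1ᵀ) = T_R(X_i, X_j). -/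
open Matrix BigOperators

noncomputable section

/-- Euclidean distance between the `p`-th column of `X` and the `q`-th column of `Y`. -/
def colDist {ci cj : ℕ} (X : Matrix (Fin 3) (Fin ci) ℝ) (Y : Matrix (Fin 3) (Fin cj) ℝ)
    (p : Fin ci) (q : Fin cj) : ℝ :=
  Real.sqrt (∑ r : Fin 3, (X r p - Y r q) ^ 2)

/-- Channel-wise distance matrix `D(X, Y)(p, q) = ‖X(:,p) − Y(:,q)‖₂`. -/
def Dmat {ci cj : ℕ} (X : Matrix (Fin 3) (Fin ci) ℝ) (Y : Matrix (Fin 3) (Fin cj) ℝ) :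
    Matrix (Fin ci) (Fin cj) ℝ :=
  Matrix.of fun p q => colDist X Y p q

/-- Rigid (Euclidean) action `g·X = QX + t1ᵀ`, acting columnwise by `x ↦ Qx + t`. -/
def rigid {c : ℕ} (Q : Matrix (Fin 3) (Fin 3) ℝ) (t : Fin 3 → ℝ)
    (X : Matrix (Fin 3) (Fin c) ℝ) : Matrix (Fin 3) (Fin c) ℝ :=
  Matrix.of fun r p => (∑ s : Fin 3, Q r s * X s p) + t r

/-- Geometric relation extractor `T_R(X_i, X_j) = A_iᵀ ((w_i w_jᵀ) ⊙ D(X_i, X_j)) A_j`. -/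
def TR {ci cj d : ℕ} (Ai : Matrix (Fin ci) (Fin d) ℝ) (Aj : Matrix (Fin cj) (Fin d) ℝ)
    (wi : Fin ci → ℝ) (wj : Fin cj → ℝ)
    (X : Matrix (Fin 3) (Fin ci) ℝ) (Y : Matrix (Fin 3) (Fin cj) ℝ) :
    Matrix (Fin d) (Fin d) ℝ :=
  Aiᵀ * (Matrix.of fun p q => wi p * wj q * Dmat X Y p q) * Aj

theorem dotProduct_mulVec_self_of_transpose_mul_self_eq_one {R m n : Type*} [CommSemiring R]
    [Fintype m] [Fintype n] [DecidableEq n] {Q : Matrix m n R} (hQ : Qᵀ * Q = 1) (v : n → R) :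
    Q *ᵥ v ⬝ᵥ Q *ᵥ v = v ⬝ᵥ v := by
  rw [dotProduct_mulVec, ← mulVec_transpose, mulVec_mulVec, hQ, one_mulVec]

theorem colDist_eq_sqrt_dotProduct {ci cj : ℕ} (X : Matrix (Fin 3) (Fin ci) ℝ)
    (Y : Matrix (Fin 3) (Fin cj) ℝ) (p : Fin ci) (q : Fin cj) :
    colDist X Y p q = √((Xᵀ p - Yᵀ q) ⬝ᵥ (Xᵀ p - Yᵀ q)) := by
  simp only [colDist, dotProduct, Pi.sub_apply, transpose_apply, sq]

theorem transpose_rigid_apply {c : ℕ} (Q : Matrix (Fin 3) (Fin 3) ℝ) (t : Fin 3 → ℝ)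
    (X : Matrix (Fin 3) (Fin c) ℝ) (p : Fin c) :
    (rigid Q t X)ᵀ p = Q *ᵥ Xᵀ p + t := by
  ext r
  simp only [rigid, transpose_apply, of_apply, Pi.add_apply, mulVec, dotProduct]

theorem colDist_rigid {ci cj : ℕ} (X : Matrix (Fin 3) (Fin ci) ℝ) (Y : Matrix (Fin 3) (Fin cj) ℝ)
    {Q : Matrix (Fin 3) (Fin 3) ℝ} (hQ : Qᵀ * Q = 1) (t : Fin 3 → ℝ) (p : Fin ci) (q : Fin cj) :
    colDist (rigid Q t X) (rigid Q t Y) p q = colDist X Y p q := by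
  rw [colDist_eq_sqrt_dotProduct, colDist_eq_sqrt_dotProduct, transpose_rigid_apply,
    transpose_rigid_apply, add_sub_add_right_eq_sub, ← mulVec_sub,
    dotProduct_mulVec_self_of_transpose_mul_self_eq_one hQ]

theorem Dmat_rigid {ci cj : ℕ} (X : Matrix (Fin 3) (Fin ci) ℝ) (Y : Matrix (Fin 3) (Fin cj) ℝ)
    {Q : Matrix (Fin 3) (Fin 3) ℝ} (hQ : Qᵀ * Q = 1) (t : Fin 3 → ℝ) :
    Dmat (rigid Q t X) (rigid Q t Y) = Dmat X Y := by
  ext p q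
  exact colDist_rigid X Y hQ t p q

theorem TR_rigid_invariant_general {ci cj d : ℕ}
    (Ai : Matrix (Fin ci) (Fin d) ℝ) (Aj : Matrix (Fin cj) (Fin d) ℝ)
    (wi : Fin ci → ℝ) (wj : Fin cj → ℝ)
    (X : Matrix (Fin 3) (Fin ci) ℝ) (Y : Matrix (Fin 3) (Fin cj) ℝ)
    (Q : Matrix (Fin 3) (Fin 3) ℝ) (hQ : Qᵀ * Q = 1) (t : Fin 3 → ℝ) :
    TR Ai Aj wi wj (rigid Q t X) (rigid Q t Y) = TR Ai Aj wi wj X Y := by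
  rw [TR, TR, Dmat_rigid X Y hQ t]

/-- The geometric relation extractor is E(3)-invariant. -/
theorem TR_rigid_invariant {ci cj d : ℕ} (hci : 0 < ci) (hcj : 0 < cj) (hd : 0 < d)
    (Ai : Matrix (Fin ci) (Fin d) ℝ) (Aj : Matrix (Fin cj) (Fin d) ℝ)
    (wi : Fin ci → ℝ) (wj : Fin cj → ℝ)
    (X : Matrix (Fin 3) (Fin ci) ℝ) (Y : Matrix (Fin 3) (Fin cj) ℝ)
    (Q : Matrix (Fin 3) (Fin 3) ℝ) (hQ : Qᵀ * Q = 1) (t : Fin 3 → ℝ) :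
    TR Ai Aj wi wj (rigid Q t X) (rigid Q t Y) = TR Ai Aj wi wj X Y :=
  TR_rigid_invariant_general Ai Aj wi wj X Y Q hQ t

end
end

section
/- Let ι be a finite index set, and for each i ∈ ι let P_i, S_i ∈ ℝ^{3×k_i} be multi-channel coordinate matrices of the same shape. Define the alignment loss L_{P,S}(Q, t) = Σ_{i∈ι} ‖Q P_i + t 1ᵀ − S_i‖_F² over O(3) × ℝ³. Fix Q₁, Q₂ ∈ O(3) and t₁, t₂ ∈ ℝ³, and set P'_i = Q₂ P_i + t₂ 1ᵀ, S'_i = Q₁ S_i + t₁ 1ᵀ. Then (Q, t) is a global minimizer of L_{P,S} over O(3) × ℝ³ if and only if (Q₁ Q Q₂ᵀ, Q₁ t + t₁ − Q₁ Q Q₂ᵀ t₂) is a global minimizer of L_{P',S'} over O(3) × ℝ³. -/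
open Matrix BigOperators

noncomputable section

/-- Alignment loss `L_{P,S}(Q, t) = Σ_i ‖Q P_i + t 1ᵀ − S_i‖_F²`. -/
def alignLoss {ι : Type*} [Fintype ι] {k : ι → ℕ}
    (P S : (i : ι) → Matrix (Fin 3) (Fin (k i)) ℝ)
    (Q : Matrix (Fin 3) (Fin 3) ℝ) (t : Fin 3 → ℝ) : ℝ :=
  ∑ i, ∑ r : Fin 3, ∑ p : Fin (k i), (rigid Q t (P i) r p - S i r p) ^ 2

/-- `(Q, t)` is a global minimizer of the alignment loss `L_{P,S}` over `O(3) × ℝ³`. -/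
def IsKabschMin {ι : Type*} [Fintype ι] {k : ι → ℕ}
    (P S : (i : ι) → Matrix (Fin 3) (Fin (k i)) ℝ)
    (Q : Matrix (Fin 3) (Fin 3) ℝ) (t : Fin 3 → ℝ) : Prop :=
  Qᵀ * Q = 1 ∧ ∀ (Q' : Matrix (Fin 3) (Fin 3) ℝ) (t' : Fin 3 → ℝ), Q'ᵀ * Q' = 1 →
    alignLoss P S Q t ≤ alignLoss P S Q' t'

/-!
With `gⱼ = (Qⱼ, tⱼ)`, conjugation `g ↦ g₁ g g₂⁻¹` is a bijection of `O(3) × ℝ³` sending `(Q, t)`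
to `(Q₁ Q Q₂ᵀ, Q₁ t + t₁ − Q₁ Q Q₂ᵀ t₂)`. Since `(g₁ g g₂⁻¹)·P'_i − S'_i = g₁·(g·P_i) − g₁·S_i
= Q₁ (g·P_i − S_i)` and `Q₁` preserves the Frobenius norm, `L_{P',S'}(g₁ g g₂⁻¹) = L_{P,S}(g)`,
so the bijection carries minimizers to minimizers.
-/

namespace Matrix

variable {m n R : Type*} [Fintype n]

theorem mul_replicateCol [NonUnitalNonAssocSemiring R] (M : Matrix m n R) (v : n → R)
    {ι : Type*} : M * replicateCol ι v = replicateCol ι (M *ᵥ v) :=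
  rfl

variable [Fintype m]

theorem sum_sum_sq_eq_trace [CommSemiring R] (M : Matrix m n R) :
    ∑ i, ∑ j, M i j ^ 2 = trace (Mᵀ * M) := by
  rw [Finset.sum_comm]
  simp [trace, mul_apply, sq]

theorem sum_sum_sq_mul_of_transpose_mul_self [DecidableEq m] [CommSemiring R]
    {Q : Matrix m m R} (hQ : Qᵀ * Q = 1) (M : Matrix m n R) :
    ∑ i, ∑ j, (Q * M) i j ^ 2 = ∑ i, ∑ j, M i j ^ 2 := by
  rw [sum_sum_sq_eq_trace, sum_sum_sq_eq_trace, transpose_mul, Matrix.mul_assoc,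
    ← Matrix.mul_assoc Qᵀ, hQ, Matrix.one_mul]

theorem transpose_mul_self_conj_eq_one_iff [DecidableEq m] [CommRing R]
    {Q₁ Q₂ B : Matrix m m R} (hQ₁ : Q₁ᵀ * Q₁ = 1) (hQ₂ : Q₂ᵀ * Q₂ = 1) :
    (Q₁ * B * Q₂ᵀ)ᵀ * (Q₁ * B * Q₂ᵀ) = 1 ↔ Bᵀ * B = 1 := by
  have hQ₂' : Q₂ * Q₂ᵀ = 1 := mul_eq_one_comm.mp hQ₂
  have hconj : (Q₁ * B * Q₂ᵀ)ᵀ * (Q₁ * B * Q₂ᵀ) = Q₂ * (Bᵀ * B) * Q₂ᵀ := by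
    simp only [transpose_mul, transpose_transpose, Matrix.mul_assoc]
    rw [← Matrix.mul_assoc Q₁ᵀ, hQ₁, Matrix.one_mul]
  rw [hconj]
  constructor
  · intro h
    calc Bᵀ * B = Q₂ᵀ * (Q₂ * (Bᵀ * B) * Q₂ᵀ) * Q₂ := by
          simp only [Matrix.mul_assoc, hQ₂, Matrix.mul_one]
          rw [← Matrix.mul_assoc Q₂ᵀ, hQ₂, Matrix.one_mul]
      _ = 1 := by rw [h, Matrix.mul_one, hQ₂]
  · intro h
    rw [h, Matrix.mul_one, hQ₂']

end Matrix

section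

variable {c : ℕ}

theorem rigid_eq_mul_add_replicateCol (Q : Matrix (Fin 3) (Fin 3) ℝ) (t : Fin 3 → ℝ)
    (X : Matrix (Fin 3) (Fin c) ℝ) :
    rigid Q t X = Q * X + replicateCol (Fin c) t :=
  rfl

theorem rigid_rigid (A B : Matrix (Fin 3) (Fin 3) ℝ) (a b : Fin 3 → ℝ)
    (X : Matrix (Fin 3) (Fin c) ℝ) :
    rigid A a (rigid B b X) = rigid (A * B) (A *ᵥ b + a) X := by
  simp only [rigid_eq_mul_add_replicateCol, Matrix.mul_add, Matrix.mul_assoc, mul_replicateCol,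
    replicateCol_add, add_assoc]

theorem rigid_sub_rigid (Q : Matrix (Fin 3) (Fin 3) ℝ) (t : Fin 3 → ℝ)
    (X Y : Matrix (Fin 3) (Fin c) ℝ) :
    rigid Q t X - rigid Q t Y = Q * (X - Y) := by
  rw [rigid_eq_mul_add_replicateCol, rigid_eq_mul_add_replicateCol, Matrix.mul_sub]
  abel

end

def rigidConj (Q₁ Q₂ : Matrix (Fin 3) (Fin 3) ℝ) (t₁ t₂ : Fin 3 → ℝ)
    (g : Matrix (Fin 3) (Fin 3) ℝ × (Fin 3 → ℝ)) : Matrix (Fin 3) (Fin 3) ℝ × (Fin 3 → ℝ) :=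
  (Q₁ * g.1 * Q₂ᵀ, Q₁ *ᵥ g.2 + t₁ - (Q₁ * g.1 * Q₂ᵀ) *ᵥ t₂)

theorem rigidConj_surjective {Q₁ Q₂ : Matrix (Fin 3) (Fin 3) ℝ} (hQ₁ : Q₁ᵀ * Q₁ = 1)
    (hQ₂ : Q₂ᵀ * Q₂ = 1) (t₁ t₂ : Fin 3 → ℝ) : Function.Surjective (rigidConj Q₁ Q₂ t₁ t₂) := by
  have hQ₁' : Q₁ * Q₁ᵀ = 1 := mul_eq_one_comm.mp hQ₁
  have hQ₂' : Q₂ * Q₂ᵀ = 1 := mul_eq_one_comm.mp hQ₂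
  rintro ⟨Q', t'⟩
  have hB : Q₁ * (Q₁ᵀ * Q' * Q₂) * Q₂ᵀ = Q' := by
    simp only [Matrix.mul_assoc, hQ₂', Matrix.mul_one]
    rw [← Matrix.mul_assoc, hQ₁', Matrix.one_mul]
  refine ⟨(Q₁ᵀ * Q' * Q₂, Q₁ᵀ *ᵥ (t' - t₁ + Q' *ᵥ t₂)), ?_⟩
  simp only [rigidConj, hB, mulVec_mulVec, hQ₁', one_mulVec, Prod.mk.injEq, true_and]
  abel

theorem alignLoss_rigidConj {ι : Type*} [Fintype ι] {k : ι → ℕ}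
    (P S : (i : ι) → Matrix (Fin 3) (Fin (k i)) ℝ) {Q₁ Q₂ : Matrix (Fin 3) (Fin 3) ℝ}
    (hQ₁ : Q₁ᵀ * Q₁ = 1) (hQ₂ : Q₂ᵀ * Q₂ = 1) (t₁ t₂ : Fin 3 → ℝ)
    (g : Matrix (Fin 3) (Fin 3) ℝ × (Fin 3 → ℝ)) :
    alignLoss (fun i => rigid Q₂ t₂ (P i)) (fun i => rigid Q₁ t₁ (S i))
        (rigidConj Q₁ Q₂ t₁ t₂ g).1 (rigidConj Q₁ Q₂ t₁ t₂ g).2 = alignLoss P S g.1 g.2 := by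
  have hcomp : ∀ {c : ℕ} (X : Matrix (Fin 3) (Fin c) ℝ),
      rigid (rigidConj Q₁ Q₂ t₁ t₂ g).1 (rigidConj Q₁ Q₂ t₁ t₂ g).2 (rigid Q₂ t₂ X)
        = rigid Q₁ t₁ (rigid g.1 g.2 X) := by
    intro c X
    rw [rigid_rigid, rigid_rigid, rigidConj, Matrix.mul_assoc (Q₁ * g.1), hQ₂, Matrix.mul_one,
      add_sub_cancel]
  unfold alignLoss
  simp_rw [hcomp, ← Matrix.sub_apply, rigid_sub_rigid, sum_sum_sq_mul_of_transpose_mul_self hQ₁]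

theorem isKabschMin_iff_of_surjective {ι ι' : Type*} [Fintype ι] [Fintype ι'] {k : ι → ℕ}
    {k' : ι' → ℕ} {P S : (i : ι) → Matrix (Fin 3) (Fin (k i)) ℝ}
    {P' S' : (i : ι') → Matrix (Fin 3) (Fin (k' i)) ℝ}
    {Φ : Matrix (Fin 3) (Fin 3) ℝ × (Fin 3 → ℝ) → Matrix (Fin 3) (Fin 3) ℝ × (Fin 3 → ℝ)}
    (hΦ : Function.Surjective Φ) (horth : ∀ g, (Φ g).1ᵀ * (Φ g).1 = 1 ↔ g.1ᵀ * g.1 = 1)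
    (hloss : ∀ g, alignLoss P' S' (Φ g).1 (Φ g).2 = alignLoss P S g.1 g.2)
    (g : Matrix (Fin 3) (Fin 3) ℝ × (Fin 3 → ℝ)) :
    IsKabschMin P S g.1 g.2 ↔ IsKabschMin P' S' (Φ g).1 (Φ g).2 := by
  unfold IsKabschMin
  rw [horth, hloss]
  refine and_congr_right fun _ => ?_
  rw [← Prod.forall', ← Prod.forall']
  conv_rhs => rw [hΦ.forall]
  simp only [horth, hloss]

/-- `(Q, t)` is a global minimizer of `L_{P,S}` over `O(3) × ℝ³` iff
`(Q₁ Q Q₂ᵀ, Q₁ t + t₁ − Q₁ Q Q₂ᵀ t₂)` is a global minimizer of `L_{P',S'}`, where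
`P'_i = Q₂ P_i + t₂ 1ᵀ` and `S'_i = Q₁ S_i + t₁ 1ᵀ`. -/
theorem isKabschMin_rigid_iff {ι : Type*} [Fintype ι] {k : ι → ℕ}
    (P S : (i : ι) → Matrix (Fin 3) (Fin (k i)) ℝ)
    (Q₁ Q₂ : Matrix (Fin 3) (Fin 3) ℝ)
    (hQ₁ : Q₁ᵀ * Q₁ = 1) (hQ₂ : Q₂ᵀ * Q₂ = 1)
    (t₁ t₂ : Fin 3 → ℝ)
    (Q : Matrix (Fin 3) (Fin 3) ℝ) (t : Fin 3 → ℝ) :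
    IsKabschMin P S Q t ↔
      IsKabschMin (fun i => rigid Q₂ t₂ (P i)) (fun i => rigid Q₁ t₁ (S i))
        (Q₁ * Q * Q₂ᵀ) (Q₁.mulVec t + t₁ - (Q₁ * Q * Q₂ᵀ).mulVec t₂) :=
  isKabschMin_iff_of_surjective (rigidConj_surjective hQ₁ hQ₂ t₁ t₂)
    (fun _ => transpose_mul_self_conj_eq_one_iff hQ₁ hQ₂) (alignLoss_rigidConj P S hQ₁ hQ₂ t₁ t₂)
    (Q, t)

end
end
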